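/- For all nonidentity two-qubit Pauli strings P and Q (not necessarily equal): ∫ Tr( V^{⊗2} ((P/2) ⊗ (P/2)) (V^{⊗2})† ((Q/2) ⊗ (Q/2)) ) dμ(V) = 1/15. -/
import Mathlib


open Matrix MeasureTheory
open scoped Kronecker

/-- The four single-qubit Pauli matrices: `I`, `X`, `Y`, `Z`. -/
noncomputable def pauli : Fin 4 → Matrix (Fin 2) (Fin 2) ℂ
  | 0 => !![1, 0; 0, 1]
  | 1 => !![0, 1; 1, 0]
  | 2 => !![0, -Complex.I; Complex.I, 0]
  | 3 => !![1, 0; 0, -1]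

noncomputable instance : MeasurableSpace (Matrix.unitaryGroup (Fin 2 × Fin 2) ℂ) := borel _
instance : BorelSpace (Matrix.unitaryGroup (Fin 2 × Fin 2) ℂ) := ⟨rfl⟩

/-! ### Auxiliary definitions and lemmas -/

abbrev qubits : Type := Fin 2 × Fin 2
abbrev qq : Type := qubits × qubits
abbrev UG := Matrix.unitaryGroup qubits ℂ

noncomputable def Sw : Matrix qq qq ℂ :=
  Matrix.of fun a b => if (a.2, a.1) = b then 1 else 0

theorem Sw_mul (M : Matrix qq qq ℂ) (a b : qq) : (Sw * M) a b = M (a.2, a.1) b := by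
  rw [Matrix.mul_apply]
  rw [Finset.sum_eq_single ((a.2, a.1) : qq)]
  · simp [Sw]
  · intro c _ hc; simp [Sw, Ne.symm hc]
  · simp

theorem mul_Sw (M : Matrix qq qq ℂ) (a b : qq) : (M * Sw) a b = M a (b.2, b.1) := by
  rw [Matrix.mul_apply]
  rw [Finset.sum_eq_single ((b.2, b.1) : qq)]
  · simp [Sw]
  · intro c _ hc
    have : (c.2, c.1) ≠ b := by rintro rfl; exact hc rfl
    simp [Sw, this]
  · simp

theorem Sw_mul_Sw : Sw * Sw = 1 := by
  ext a b
  rw [Sw_mul]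
  simp [Sw, Matrix.one_apply, Prod.ext_iff, and_comm, eq_comm]

theorem trace_Sw : Sw.trace = 4 := by
  have h : Sw.trace = ∑ a : qq, (if (a.2 , a.1) = a then (1:ℂ) else 0) := rfl
  rw [h, Finset.sum_ite, Finset.sum_const, Finset.sum_const]
  norm_num
  have h2 : (Finset.filter (fun a : qq => (a.2, a.1) = a) Finset.univ).card = 4 := by decide
  rw [h2]; norm_num

theorem trace_kron_Sw (X Y : Matrix qubits qubits ℂ) :
    ((X ⊗ₖ Y) * Sw).trace = (X * Y).trace := by
  have h : ∀ a : qq, ((X ⊗ₖ Y) * Sw) a a = X a.1 a.2 * Y a.2 a.1 := by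
    intro a; rw [mul_Sw]; rfl
  have : ((X ⊗ₖ Y) * Sw).trace = ∑ a : qq, X a.1 a.2 * Y a.2 a.1 := by
    apply Finset.sum_congr rfl; intro a _; exact h a
  rw [this]
  rw [Fintype.sum_prod_type]
  simp [Matrix.trace, Matrix.diag, Matrix.mul_apply]

theorem Sw_comm (X : Matrix qubits qubits ℂ) : Sw * (X ⊗ₖ X) = (X ⊗ₖ X) * Sw := by
  ext a b
  rw [Sw_mul, mul_Sw]
  show X a.2 b.1 * X a.1 b.2 = X a.1 b.2 * X a.2 b.1
  ring

def cnt (p : qubits) (a : qq) : ℕ := (if a.1 = p then 1 else 0) + (if a.2 = p then 1 else 0)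

theorem cnt_le (p : qubits) (a : qq) : cnt p a ≤ 2 := by
  unfold cnt; split <;> split <;> norm_num

theorem cnt_inj : ∀ a b : qq, (∀ p : qubits, cnt p a = cnt p b) → b = a ∨ b = (a.2, a.1) := by
  decide

theorem I_pow_inj {m m' : ℕ} (hm : m ≤ 2) (hm' : m' ≤ 2) (h : Complex.I ^ m = Complex.I ^ m') :
    m = m' := by
  interval_cases m <;> interval_cases m' <;> simp_all [pow_succ, Complex.ext_iff] <;> norm_num at h

noncomputable def dg (p : qubits) : qubits → ℂ := fun q => if q = p then Complex.I else 1

theorem dg_unitary (p : qubits) : Matrix.diagonal (dg p) ∈ Matrix.unitaryGroup qubits ℂ := by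
  rw [Matrix.mem_unitaryGroup_iff]
  show _ * (Matrix.diagonal (dg p))ᴴ = 1
  rw [Matrix.diagonal_conjTranspose, Matrix.diagonal_mul_diagonal]
  have : (fun i => dg p i * (star (dg p)) i) = fun _ => (1:ℂ) := by
    funext q
    by_cases hq : q = p <;> simp [dg, hq, Complex.ext_iff]
  rw [this, Matrix.diagonal_one]

theorem dg_pow (p : qubits) (a : qq) : dg p a.1 * dg p a.2 = Complex.I ^ cnt p a := by
  simp only [dg, cnt]
  split <;> split <;> simp [pow_succ]

theorem support_lemma (M : Matrix qq qq ℂ)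
    (h : ∀ V : Matrix qubits qubits ℂ, V ∈ Matrix.unitaryGroup qubits ℂ →
      (V ⊗ₖ V) * M = M * (V ⊗ₖ V))
    (a b : qq) (h1 : b ≠ a) (h2 : b ≠ (a.2, a.1)) : M a b = 0 := by
  by_contra hM
  have key : ∀ p : qubits, cnt p a = cnt p b := by
    intro p
    have hc := h (Matrix.diagonal (dg p)) (dg_unitary p)
    rw [Matrix.diagonal_kronecker_diagonal] at hc
    have he := congrFun (congrFun hc a) b
    rw [Matrix.diagonal_mul, Matrix.mul_diagonal] at he
    rw [dg_pow, dg_pow] at he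
    rw [mul_comm] at he
    have : Complex.I ^ cnt p a = Complex.I ^ cnt p b := mul_left_cancel₀ hM he
    exact I_pow_inj (cnt_le p a) (cnt_le p b) this
  rcases cnt_inj a b key with h' | h'
  · exact h1 h'
  · exact h2 h'

noncomputable def pm (σ : Equiv.Perm qubits) : Matrix qubits qubits ℂ :=
  Matrix.of fun i j => if i = σ j then 1 else 0

theorem pm_unitary (σ : Equiv.Perm qubits) : pm σ ∈ Matrix.unitaryGroup qubits ℂ := by
  rw [Matrix.mem_unitaryGroup_iff]
  ext i j
  rw [Matrix.mul_apply]
  rw [Finset.sum_eq_single (σ.symm i)]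
  · by_cases hij : i = j
    · simp [pm, Matrix.conjTranspose_apply, hij, Matrix.one_apply, Equiv.eq_symm_apply]
    · simp [pm, Matrix.conjTranspose_apply, hij, Matrix.one_apply, Equiv.eq_symm_apply,
        Ne.symm hij, eq_comm]
  · intro c _ hc
    have : i ≠ σ c := fun h => hc (by simp [h])
    simp [pm, this]
  · simp

theorem pm_relation (M : Matrix qq qq ℂ)
    (h : ∀ V : Matrix qubits qubits ℂ, V ∈ Matrix.unitaryGroup qubits ℂ →
      (V ⊗ₖ V) * M = M * (V ⊗ₖ V))
    (σ : Equiv.Perm qubits) (i j k l : qubits) :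
    M (i, j) (k, l) = M (σ i, σ j) (σ k, σ l) := by
  have hc := h (pm σ) (pm_unitary σ)
  have he := congrFun (congrFun hc ((σ i, σ j) : qq)) ((k, l) : qq)
  rw [Matrix.mul_apply, Matrix.mul_apply] at he
  rw [Finset.sum_eq_single ((i, j) : qq)] at he
  rw [Finset.sum_eq_single ((σ k, σ l) : qq)] at he
  · simpa [pm, Matrix.kroneckerMap_apply] using he
  · intro c _ hc'
    have : ¬(c.1 = σ k ∧ c.2 = σ l) := by
      rintro ⟨h1, h2⟩; exact hc' (Prod.ext h1 h2)
    rcases not_and_or.mp this with h' | h' <;> simp [pm, Matrix.kroneckerMap_apply, h']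
  · simp
  · intro c _ hc'
    have : ¬(σ i = σ c.1 ∧ σ j = σ c.2) := by
      rintro ⟨h1, h2⟩
      exact hc' (Prod.ext (σ.injective h1.symm) (σ.injective h2.symm))
    rcases not_and_or.mp this with h' | h' <;> simp [pm, Matrix.kroneckerMap_apply, h']
  · simp

theorem perm_exists {i j k l : qubits} (hij : i ≠ j) (hkl : k ≠ l) :
    ∃ σ : Equiv.Perm qubits, σ i = k ∧ σ j = l := by
  set τ := Equiv.swap i k with hτ
  have hτi : τ i = k := Equiv.swap_apply_left i k
  have hjk : τ j ≠ k := by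
    rw [← hτi]; exact fun h => hij (τ.injective h).symm
  refine ⟨τ.trans (Equiv.swap (τ j) l), ?_, ?_⟩
  · simp only [Equiv.trans_apply, hτi]
    exact Equiv.swap_apply_of_ne_of_ne (Ne.symm hjk) hkl
  · simp only [Equiv.trans_apply]
    exact Equiv.swap_apply_left _ _

noncomputable def Hm : Matrix qubits qubits ℂ :=
  Matrix.of fun i j =>
    if i = ((0,0) : qubits) then (if j = ((0,0) : qubits) then 3/5 else if j = ((0,1) : qubits) then 4/5 else 0)
    else if i = ((0,1) : qubits) then (if j = ((0,0) : qubits) then -(4/5) else if j = ((0,1) : qubits) then 3/5 else 0)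
    else if i = j then 1 else 0

theorem Hm_unitary : Hm ∈ Matrix.unitaryGroup qubits ℂ := by
  rw [Matrix.mem_unitaryGroup_iff]
  ext i j
  fin_cases i <;> fin_cases j <;>
    simp [Hm, Matrix.mul_apply, Fintype.sum_prod_type, Fin.sum_univ_two,
      Matrix.conjTranspose_apply, Matrix.one_apply, Prod.ext_iff] <;>
    norm_num [map_ofNat]

theorem gamma_eq (M : Matrix qq qq ℂ)
    (h : ∀ V : Matrix qubits qubits ℂ, V ∈ Matrix.unitaryGroup qubits ℂ →
      (V ⊗ₖ V) * M = M * (V ⊗ₖ V)) :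
    M (((0,0), (0,0)) : qq) (((0,0), (0,0)) : qq)
      = M (((0,0), (0,1)) : qq) (((0,0), (0,1)) : qq)
        + M (((0,0), (0,1)) : qq) (((0,1), (0,0)) : qq) := by
  have z1 : M (((0,0),(0,0)) : qq) (((0,0),(0,1)) : qq) = 0 :=
    support_lemma M h _ _ (by decide) (by decide)
  have z2 : M (((0,0),(0,0)) : qq) (((0,1),(0,0)) : qq) = 0 :=
    support_lemma M h _ _ (by decide) (by decide)
  have z3 : M (((0,0),(0,0)) : qq) (((0,1),(0,1)) : qq) = 0 :=
    support_lemma M h _ _ (by decide) (by decide)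
  have z4 : M (((0,1),(0,1)) : qq) (((0,0),(0,1)) : qq) = 0 :=
    support_lemma M h _ _ (by decide) (by decide)
  have hsw : M (((0,0), (0,1)) : qq) (((0,1), (0,0)) : qq)
      = M (((0,1), (0,0)) : qq) (((0,0), (0,1)) : qq) := by
    have := pm_relation M h (Equiv.swap ((0,0) : qubits) ((0,1) : qubits)) (0,0) (0,1) (0,1) (0,0)
    simpa [Equiv.swap_apply_left, Equiv.swap_apply_right] using this
  have he := congrFun (congrFun (h Hm Hm_unitary) ((((0,0)),((0,0))) : qq)) ((((0,0)),((0,1))) : qq)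
  rw [Matrix.mul_apply, Matrix.mul_apply] at he
  rw [Fintype.sum_prod_type, Fintype.sum_prod_type] at he
  simp only [Fin.sum_univ_two, Fintype.sum_prod_type, Matrix.kroneckerMap_apply, Hm,
    Matrix.of_apply, z1, z2, z3, z4] at he
  norm_num [Prod.ext_iff, Prod.fst_one, Prod.snd_one, Fin.ext_iff] at he
  rw [hsw]
  simp only [Prod.mk_zero_zero, Prod.mk_one_one] at he ⊢
  linear_combination (-25/12 : ℂ) * he

theorem commutant (M : Matrix qq qq ℂ)
    (h : ∀ V : Matrix qubits qubits ℂ, V ∈ Matrix.unitaryGroup qubits ℂ →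
      (V ⊗ₖ V) * M = M * (V ⊗ₖ V)) :
    M = (M (((0,0), (0,1)) : qq) (((0,0), (0,1)) : qq)) • 1
        + (M (((0,0), (0,1)) : qq) (((0,1), (0,0)) : qq)) • Sw := by
  set α := M (((0,0), (0,1)) : qq) (((0,0), (0,1)) : qq) with hα
  set β := M (((0,0), (0,1)) : qq) (((0,1), (0,0)) : qq) with hβ
  ext a b
  have hrhs : (α • (1 : Matrix qq qq ℂ) + β • Sw) a b
      = α * (if a = b then 1 else 0) + β * (if (a.2, a.1) = b then 1 else 0) := by
    simp [Matrix.add_apply, Matrix.smul_apply, Matrix.one_apply, Sw, smul_eq_mul]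
  rw [hrhs]
  by_cases h1 : b = a
  · by_cases hd : a.1 = a.2
    · -- diagonal case  a = (i,i), b = a
      have ha : a = ((a.1, a.1) : qq) := by rw [Prod.ext_iff]; exact ⟨rfl, hd.symm⟩
      have hg : M a b = α + β := by
        rw [h1, ha]
        have hrel := pm_relation M h (Equiv.swap a.1 ((0,0) : qubits)) a.1 a.1 a.1 a.1
        rw [hrel, Equiv.swap_apply_left]
        exact gamma_eq M h
      rw [hg, if_pos h1.symm, if_pos]
      · ring
      · rw [h1, Prod.ext_iff]; exact ⟨hd.symm, hd⟩
    · -- off-diagonal, b = a : entry α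
      obtain ⟨σ, hσ1, hσ2⟩ := perm_exists hd (show ((0,0):qubits) ≠ ((0,1):qubits) by decide)
      have hg : M a b = α := by
        rw [h1, show a = ((a.1, a.2) : qq) from rfl]
        rw [pm_relation M h σ a.1 a.2 a.1 a.2, hσ1, hσ2]
      rw [hg, if_pos h1.symm, if_neg]
      · ring
      · rw [h1]
        intro hc
        exact hd (congrArg Prod.fst hc).symm
  · by_cases h2 : b = (a.2, a.1)
    · -- swapped case : entry β
      have hd : a.1 ≠ a.2 := by
        intro hc
        apply h1
        rw [h2, Prod.ext_iff]; exact ⟨hc.symm, hc⟩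
      obtain ⟨σ, hσ1, hσ2⟩ := perm_exists hd (show ((0,0):qubits) ≠ ((0,1):qubits) by decide)
      have hg : M a b = β := by
        rw [h2, show a = ((a.1, a.2) : qq) from rfl]
        rw [pm_relation M h σ a.1 a.2 a.2 a.1, hσ1, hσ2]
      rw [hg, if_neg (fun hc => h1 hc.symm), if_pos h2.symm]
      ring
    · rw [support_lemma M h a b h1 h2, if_neg (fun hc => h1 hc.symm),
        if_neg (fun hc => h2 hc.symm)]
      ring

noncomputable def ku (V : UG) : Matrix qq qq ℂ :=
  (V : Matrix qubits qubits ℂ) ⊗ₖ (V : Matrix qubits qubits ℂ)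

theorem conjT_kron (X Y : Matrix qubits qubits ℂ) : (X ⊗ₖ Y)ᴴ = Xᴴ ⊗ₖ Yᴴ := by
  ext a b
  simp [Matrix.conjTranspose_apply, Matrix.kroneckerMap_apply]

theorem ku_star_mul (V : UG) : (ku V)ᴴ * ku V = 1 := by
  rw [ku, conjT_kron, ← Matrix.mul_kronecker_mul]
  rw [show ((V : Matrix qubits qubits ℂ))ᴴ = star (V : Matrix qubits qubits ℂ) from rfl]
  rw [V.2.1, Matrix.one_kronecker_one]

theorem ku_mul_star (V : UG) : ku V * (ku V)ᴴ = 1 := by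
  rw [ku, conjT_kron, ← Matrix.mul_kronecker_mul]
  rw [show ((V : Matrix qubits qubits ℂ))ᴴ = star (V : Matrix qubits qubits ℂ) from rfl]
  rw [V.2.2, Matrix.one_kronecker_one]

theorem continuous_ku : Continuous ku := by
  apply continuous_matrix
  intro a b
  exact ((continuous_subtype_val.matrix_elem a.1 b.1).mul
    (continuous_subtype_val.matrix_elem a.2 b.2))

theorem ku_entry_bound (V : UG) (a b : qq) : ‖ku V a b‖ ≤ 1 := by
  rw [ku, Matrix.kroneckerMap_apply, norm_mul]
  exact mul_le_one₀ (entry_norm_bound_of_unitary V.2 _ _) (norm_nonneg _)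
    (entry_norm_bound_of_unitary V.2 _ _)

variable (μ : MeasureTheory.Measure UG) [MeasureTheory.IsProbabilityMeasure μ]

theorem integrable_base (N : Matrix qq qq ℂ) (a b : qq) :
    MeasureTheory.Integrable (fun V : UG => (ku V * N * (ku V)ᴴ) a b) μ := by
  constructor
  · apply Continuous.aestronglyMeasurable
    exact ((continuous_ku.matrix_mul continuous_const).matrix_mul
      continuous_ku.matrix_conjTranspose).matrix_elem a b
  · apply MeasureTheory.HasFiniteIntegral.of_bounded
      (C := ∑ q : qq, ∑ p : qq, ‖N p q‖)
    apply MeasureTheory.ae_of_all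
    intro V
    have expand : (ku V * N * (ku V)ᴴ) a b = ∑ q : qq, ∑ p : qq,
        ku V a p * N p q * (ku V)ᴴ q b := by
      rw [Matrix.mul_apply]
      congr 1
      funext q
      rw [Matrix.mul_apply, Finset.sum_mul]
    rw [expand]
    refine (norm_sum_le _ _).trans (Finset.sum_le_sum fun q _ => ?_)
    refine (norm_sum_le _ _).trans (Finset.sum_le_sum fun p _ => ?_)
    rw [norm_mul, norm_mul]
    calc ‖ku V a p‖ * ‖N p q‖ * ‖(ku V)ᴴ q b‖
        ≤ 1 * ‖N p q‖ * 1 := by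
          gcongr
          · exact ku_entry_bound V a p
          · simpa [Matrix.conjTranspose_apply] using ku_entry_bound V b q
      _ = ‖N p q‖ := by ring

theorem ku_mul (W V : UG) : ku (W * V) = ku W * ku V := by
  have hc : ((W * V : UG) : Matrix qubits qubits ℂ)
      = (W : Matrix qubits qubits ℂ) * (V : Matrix qubits qubits ℂ) := rfl
  simp only [ku, hc, Matrix.mul_kronecker_mul]

instance : MeasurableMul UG := by
  constructor
  · intro c
    apply Continuous.measurable
    exact Continuous.subtype_mk (continuous_const.matrix_mul continuous_subtype_val) _
  · intro c
    apply Continuous.measurable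
    exact Continuous.subtype_mk (continuous_subtype_val.matrix_mul continuous_const) _

theorem key_alg (NA : Matrix qq qq ℂ) (W V : UG) :
    ku W * (ku V * NA * (ku V)ᴴ) = ku (W * V) * NA * (ku (W * V))ᴴ * ku W := by
  rw [ku_mul, Matrix.conjTranspose_mul]
  calc ku W * (ku V * NA * (ku V)ᴴ)
      = ku W * ku V * NA * ((ku V)ᴴ * ((ku W)ᴴ * ku W)) := by
        rw [ku_star_mul, Matrix.mul_one]; noncomm_ring
    _ = ku W * ku V * NA * ((ku V)ᴴ * (ku W)ᴴ * ku W) := by rw [Matrix.mul_assoc ((ku V)ᴴ)]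
    _ = ku W * ku V * NA * ((ku V)ᴴ * (ku W)ᴴ) * ku W := by rw [← Matrix.mul_assoc]

variable (μ : Measure UG) [IsProbabilityMeasure μ] [μ.IsHaarMeasure]

noncomputable def mMat (NA : Matrix qq qq ℂ) : Matrix qq qq ℂ :=
  Matrix.of fun a b => ∫ V : UG, (ku V * NA * (ku V)ᴴ) a b ∂μ

theorem mMat_comm (NA : Matrix qq qq ℂ) (W : UG) :
    ku W * mMat μ NA = mMat μ NA * ku W := by
  ext a b
  rw [Matrix.mul_apply, Matrix.mul_apply]
  have step1 : ∀ c, ku W a c * mMat μ NA c b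
      = ∫ V : UG, ku W a c * (ku V * NA * (ku V)ᴴ) c b ∂μ := by
    intro c
    rw [show (mMat μ NA) c b = ∫ V : UG, (ku V * NA * (ku V)ᴴ) c b ∂μ from rfl]
    rw [show ku W a c * (∫ V : UG, (ku V * NA * (ku V)ᴴ) c b ∂μ)
      = ku W a c • (∫ V : UG, (ku V * NA * (ku V)ᴴ) c b ∂μ) from rfl]
    rw [← integral_smul (ku W a c) _]
    rfl
  simp_rw [step1]
  rw [← integral_finset_sum _ (fun c _ => (integrable_base μ NA c b).const_mul _)]
  have step2 : ∀ V : UG, (∑ c, ku W a c * (ku V * NA * (ku V)ᴴ) c b)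
      = (ku (W * V) * NA * (ku (W * V))ᴴ * ku W) a b := by
    intro V
    rw [← Matrix.mul_apply, ← Matrix.mul_assoc, ← Matrix.mul_assoc, ← key_alg]
    rw [Matrix.mul_assoc (ku W), Matrix.mul_assoc (ku W)]
  simp_rw [step2]
  have inv : (∫ V : UG, (ku (W * V) * NA * (ku (W * V))ᴴ * ku W) a b ∂μ)
      = ∫ V : UG, (ku V * NA * (ku V)ᴴ * ku W) a b ∂μ :=
    integral_mul_left_eq_self (fun X : UG => ((ku X * NA * (ku X)ᴴ * ku W) a b)) W
  rw [inv]
  have step3 : ∀ V : UG, (ku V * NA * (ku V)ᴴ * ku W) a b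
      = ∑ c, (ku V * NA * (ku V)ᴴ) a c * ku W c b := fun V => Matrix.mul_apply
  simp_rw [step3]
  rw [integral_finset_sum _ (fun c _ => (integrable_base μ NA a c).mul_const _)]
  congr 1
  funext c
  rw [show (mMat μ NA) a c = ∫ V : UG, (ku V * NA * (ku V)ᴴ) a c ∂μ from rfl]
  rw [show (∫ V : UG, (ku V * NA * (ku V)ᴴ) a c ∂μ) * ku W c b
    = (∫ V : UG, (ku V * NA * (ku V)ᴴ) a c ∂μ) • ku W c b from rfl]
  rw [← integral_smul_const]
  rfl

-- pointwise conjugation-invariance of traces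
theorem trace_conj (NA : Matrix qq qq ℂ) (V : UG) :
    (ku V * NA * (ku V)ᴴ).trace = NA.trace := by
  rw [Matrix.trace_mul_cycle, ku_star_mul, Matrix.one_mul]

theorem trace_conj_Sw (NA : Matrix qq qq ℂ) (V : UG) :
    (ku V * NA * (ku V)ᴴ * Sw).trace = (NA * Sw).trace := by
  have hsw : (ku V)ᴴ * Sw = Sw * (ku V)ᴴ := by
    have := Sw_comm ((V : Matrix qubits qubits ℂ))ᴴ
    rw [← conjT_kron] at this
    exact this.symm
  rw [Matrix.mul_assoc (ku V * NA), hsw, ← Matrix.mul_assoc]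
  rw [Matrix.trace_mul_cycle, ← Matrix.mul_assoc, ku_star_mul, Matrix.one_mul]

-- integral exchange: ∫ tr(f V * D) = tr(mMat * D)
theorem integral_trace_mul (NA D : Matrix qq qq ℂ) :
    (∫ V : UG, (ku V * NA * (ku V)ᴴ * D).trace ∂μ) = (mMat μ NA * D).trace := by
  have step1 : ∀ V : UG, (ku V * NA * (ku V)ᴴ * D).trace
      = ∑ a : qq, ∑ c : qq, (ku V * NA * (ku V)ᴴ) a c * D c a := by
    intro V
    rw [Matrix.trace]
    exact Finset.sum_congr rfl fun a _ => Matrix.mul_apply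
  simp_rw [step1]
  rw [integral_finset_sum _ (fun a _ => integrable_finset_sum _
    (fun c _ => (integrable_base μ NA a c).mul_const _))]
  rw [Matrix.trace]
  refine Finset.sum_congr rfl fun a _ => ?_
  rw [integral_finset_sum _ (fun c _ => (integrable_base μ NA a c).mul_const _)]
  rw [show (mMat μ NA * D).diag a = ∑ c, (mMat μ NA) a c * D c a from Matrix.mul_apply]
  refine Finset.sum_congr rfl fun c _ => ?_
  rw [show (mMat μ NA) a c = ∫ V : UG, (ku V * NA * (ku V)ᴴ) a c ∂μ from rfl]
  rw [show (∫ V : UG, (ku V * NA * (ku V)ᴴ) a c ∂μ) * D c a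
    = (∫ V : UG, (ku V * NA * (ku V)ᴴ) a c ∂μ) • D c a from rfl]
  rw [← integral_smul_const]
  rfl

theorem mMat_trace (NA : Matrix qq qq ℂ) : (mMat μ NA).trace = NA.trace := by
  have h1 := integral_trace_mul μ NA 1
  simp_rw [Matrix.mul_one] at h1
  rw [← h1]
  simp_rw [trace_conj NA]
  simp [measure_univ]

theorem mMat_trace_Sw (NA : Matrix qq qq ℂ) : (mMat μ NA * Sw).trace = (NA * Sw).trace := by
  rw [← integral_trace_mul μ NA Sw]
  simp_rw [trace_conj_Sw NA]
  simp [measure_univ]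

theorem pauli_mul_self (k : Fin 4) : pauli k * pauli k = 1 := by
  fin_cases k <;>
    simp [pauli, Matrix.mul_fin_two, Matrix.one_fin_two, Complex.I_mul_I]

theorem pauli_trace (k : Fin 4) (hk : k ≠ 0) : (pauli k).trace = 0 := by
  fin_cases k
  · exact absurd rfl hk
  · simp [pauli, Matrix.trace_fin_two_of]
  · simp [pauli, Matrix.trace_fin_two_of]
  · simp [pauli, Matrix.trace_fin_two_of]

theorem traceP (r₁ r₂ : Fin 4) (h : ¬(r₁ = 0 ∧ r₂ = 0)) :
    ((1/2 : ℂ) • (pauli r₁ ⊗ₖ pauli r₂)).trace = 0 := by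
  rw [Matrix.trace_smul, Matrix.trace_kronecker]
  rcases not_and_or.mp h with h' | h'
  · rw [pauli_trace _ h', zero_mul, smul_zero]
  · rw [pauli_trace _ h', mul_zero, smul_zero]

theorem sqP (r₁ r₂ : Fin 4) :
    ((1/2:ℂ) • (pauli r₁ ⊗ₖ pauli r₂)) * ((1/2:ℂ) • (pauli r₁ ⊗ₖ pauli r₂))
      = (1/4 : ℂ) • (1 : Matrix qubits qubits ℂ) := by
  rw [smul_mul_assoc, mul_smul_comm, ← Matrix.mul_kronecker_mul, pauli_mul_self, pauli_mul_self,
    Matrix.one_kronecker_one, smul_smul]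
  norm_num

theorem trace_sqP (r₁ r₂ : Fin 4) :
    (((1/2:ℂ) • (pauli r₁ ⊗ₖ pauli r₂)) * ((1/2:ℂ) • (pauli r₁ ⊗ₖ pauli r₂))).trace = 1 := by
  rw [sqP, Matrix.trace_smul, Matrix.trace_one]
  simp

/-- For all nonidentity two-qubit Pauli strings `P = pauli p₁ ⊗ pauli p₂` and
`Q = pauli q₁ ⊗ pauli q₂` (not necessarily equal), with `μ` the Haar probability measure on
the group `U(4)` of unitary `4×4` matrices (indexed by `Fin 2 × Fin 2`):
`∫ Tr(V^{⊗2} ((P/2) ⊗ (P/2)) (V^{⊗2})† ((Q/2) ⊗ (Q/2))) dμ(V) = 1/15`. -/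
theorem haar_average_trace_pauli_pair (μ : Measure (Matrix.unitaryGroup (Fin 2 × Fin 2) ℂ))
    [μ.IsHaarMeasure] [IsProbabilityMeasure μ]
    (p₁ p₂ q₁ q₂ : Fin 4)
    (hP : pauli p₁ ⊗ₖ pauli p₂ ≠ pauli 0 ⊗ₖ pauli 0)
    (hQ : pauli q₁ ⊗ₖ pauli q₂ ≠ pauli 0 ⊗ₖ pauli 0) :
    (∫ V : Matrix.unitaryGroup (Fin 2 × Fin 2) ℂ,
        (((V : Matrix (Fin 2 × Fin 2) (Fin 2 × Fin 2) ℂ) ⊗ₖ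
            (V : Matrix (Fin 2 × Fin 2) (Fin 2 × Fin 2) ℂ)) *
          (((1 / 2 : ℂ) • (pauli p₁ ⊗ₖ pauli p₂)) ⊗ₖ ((1 / 2 : ℂ) • (pauli p₁ ⊗ₖ pauli p₂))) *
          ((V : Matrix (Fin 2 × Fin 2) (Fin 2 × Fin 2) ℂ) ⊗ₖ
            (V : Matrix (Fin 2 × Fin 2) (Fin 2 × Fin 2) ℂ))ᴴ *
          (((1 / 2 : ℂ) • (pauli q₁ ⊗ₖ pauli q₂)) ⊗ₖ
            ((1 / 2 : ℂ) • (pauli q₁ ⊗ₖ pauli q₂)))).trace ∂μ) = 1 / 15 := by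
  have hp : ¬(p₁ = 0 ∧ p₂ = 0) := by rintro ⟨rfl, rfl⟩; exact hP rfl
  have hq : ¬(q₁ = 0 ∧ q₂ = 0) := by rintro ⟨rfl, rfl⟩; exact hQ rfl
  set A : Matrix qubits qubits ℂ := (1/2 : ℂ) • (pauli p₁ ⊗ₖ pauli p₂) with hA
  set B : Matrix qubits qubits ℂ := (1/2 : ℂ) • (pauli q₁ ⊗ₖ pauli q₂) with hB
  have hgoal : (∫ V : UG, (ku V * (A ⊗ₖ A) * (ku V)ᴴ * (B ⊗ₖ B)).trace ∂μ) = 1/15 → 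
      (∫ V : UG,
        (((V : Matrix qubits qubits ℂ) ⊗ₖ (V : Matrix qubits qubits ℂ)) * (A ⊗ₖ A) *
          ((V : Matrix qubits qubits ℂ) ⊗ₖ (V : Matrix qubits qubits ℂ))ᴴ *
          (B ⊗ₖ B)).trace ∂μ) = 1/15 := fun h => h
  apply hgoal
  rw [integral_trace_mul μ (A ⊗ₖ A) (B ⊗ₖ B)]
  have hcomm : ∀ V : Matrix qubits qubits ℂ, V ∈ Matrix.unitaryGroup qubits ℂ →
      (V ⊗ₖ V) * mMat μ (A ⊗ₖ A) = mMat μ (A ⊗ₖ A) * (V ⊗ₖ V) := fun V hV =>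
    mMat_comm μ (A ⊗ₖ A) ⟨V, hV⟩
  have hdec := commutant _ hcomm
  set α := (mMat μ (A ⊗ₖ A)) (((0,0), (0,1)) : qq) (((0,0), (0,1)) : qq) with hα
  set β := (mMat μ (A ⊗ₖ A)) (((0,0), (0,1)) : qq) (((0,1), (0,0)) : qq) with hβ
  have card16 : (Matrix.trace (1 : Matrix qq qq ℂ)) = 16 := by
    rw [Matrix.trace_one]; simp
  have eq1 : α * 16 + β * 4 = 0 := by
    have h1 := mMat_trace μ (A ⊗ₖ A)
    rw [hdec] at h1
    rw [Matrix.trace_add, Matrix.trace_smul, Matrix.trace_smul, card16, trace_Sw] at h1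
    rw [Matrix.trace_kronecker, traceP p₁ p₂ hp, mul_zero] at h1
    simpa [smul_eq_mul] using h1
  have eq2 : α * 4 + β * 16 = 1 := by
    have h2 := mMat_trace_Sw μ (A ⊗ₖ A)
    rw [hdec] at h2
    rw [add_mul, smul_mul_assoc, smul_mul_assoc, one_mul, Sw_mul_Sw] at h2
    rw [Matrix.trace_add, Matrix.trace_smul, Matrix.trace_smul, card16, trace_Sw] at h2
    rw [trace_kron_Sw, trace_sqP p₁ p₂] at h2
    simpa [smul_eq_mul] using h2
  rw [hdec, add_mul, smul_mul_assoc, smul_mul_assoc, one_mul]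
  rw [Matrix.trace_add, Matrix.trace_smul, Matrix.trace_smul]
  rw [Matrix.trace_kronecker, traceP q₁ q₂ hq, mul_zero, smul_zero]
  rw [Matrix.trace_mul_comm, trace_kron_Sw, trace_sqP q₁ q₂]
  rw [smul_eq_mul, mul_one, zero_add]
  linear_combination (-1/60 : ℂ) * eq1 + (1/15 : ℂ) * eq2
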